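/- arXiv:2309.03818 — 3 statements merged into one kernel-verified Lean document; each statement's English description precedes it below -/
import Mathlib

section
/- Fix ε ∈ (0,1), set p = 1+ε, and let C > 0. There exists a non-decreasing function φ: ℝ → ℝ satisfying −log(1 − x + C·|x|^p) ≤ φ(x) ≤ log(1 + x + C·|x|^p) for all x ∈ ℝ if and only if C ≥ (ε/(1+ε))^((1+ε)/2) · ((1−ε)/ε)^((1−ε)/2) (with the convention 0^0 = 1). -/
/-!
Write `g x = 1 + x + C|x|^p`. A monotone `φ` between `-log g(-x)` and `log g x` exists iff
`-log g(-y) ≤ log g x` whenever `y ≤ x` (take `φ x = sup_{y ≤ x} -log g(-y)`). As `g ≥ 1` increases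
on `[0, ∞)`, this is equivalent to the diagonal case `g(-x) g(x) = (1 + C|x|^p)² - x² ≥ 1`; that
`g(-x) > 0` is forced, since otherwise `-log g(-·)` would be unbounded before the first zero.
Substituting `|x| = t₀ s` with `t₀ = √(1 - ε²)/ε`, the diagonal inequality for `C = catoniConst ε`
is the weighted AM-GM inequality `s^(1-ε) ≤ ((1-ε) s^(1+ε) + 2ε)/(1+ε)`, with equality at `s = 1`.
-/

open Real Set

theorem exists_monotone_between_iff {α β : Type*} [Preorder α]
    [ConditionallyCompleteLattice β] {a b : α → β} :
    (∃ φ : α → β, Monotone φ ∧ ∀ x, a x ≤ φ x ∧ φ x ≤ b x) ↔ ∀ y x, y ≤ x → a y ≤ b x := by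
  constructor
  · rintro ⟨φ, hφ, hab⟩ y x hyx
    exact (hab y).1.trans ((hφ hyx).trans (hab x).2)
  · intro h
    have hbdd : ∀ x, BddAbove (a '' Iic x) := fun x =>
      ⟨b x, forall_mem_image.2 fun y hy => h y x hy⟩
    refine ⟨fun x => sSup (a '' Iic x), fun x x' hxx' => ?_, fun x => ⟨?_, ?_⟩⟩
    · exact csSup_le_csSup (hbdd x') (nonempty_Iic.image a)
        (image_mono (Iic_subset_Iic.2 hxx'))
    · exact le_csSup (hbdd x) (mem_image_of_mem a (mem_Iic.2 le_rfl))
    · exact csSup_le (nonempty_Iic.image a) (forall_mem_image.2 fun y hy => h y x hy)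

theorem neg_log_le_log_iff {a b : ℝ} (ha : 0 < a) (hb : 0 < b) :
    -log a ≤ log b ↔ 1 ≤ a * b := by
  rw [neg_le_iff_add_nonneg', ← log_mul ha.ne' hb.ne', log_nonneg_iff (mul_pos ha hb)]

theorem pos_of_continuousOn_of_neg_log_le {f : ℝ → ℝ} {a b M : ℝ} (hab : a ≤ b)
    (hf : ContinuousOn f (Icc a b)) (ha : 0 < f a) (hM : ∀ y ∈ Icc a b, -log (f y) ≤ M) :
    0 < f b := by
  by_contra! hb
  set δ := min (f a) (exp (-(M + 1)))
  have hδ : 0 < δ := lt_min ha (exp_pos _)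
  obtain ⟨c, hc, hfc⟩ := intermediate_value_Icc' hab hf ⟨hb.trans hδ.le, min_le_left _ _⟩
  have hlog : log δ ≤ -(M + 1) := by
    simpa using log_le_log hδ (min_le_right (f a) (exp (-(M + 1))))
  linarith [hfc ▸ hM c hc]

theorem one_le_comp_neg_mul_of_le {g : ℝ → ℝ} (hmono : MonotoneOn g (Ici 0))
    (hone : ∀ x, 0 ≤ x → 1 ≤ g x) (hdiag : ∀ x, 1 ≤ g (-x) * g x) {y x : ℝ} (hyx : y ≤ x) :
    1 ≤ g (-y) * g x := by
  have hpos : ∀ x, 0 < g x := by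
    intro x
    rcases le_total 0 x with hx | hx
    · exact one_pos.trans_le (hone x hx)
    · exact pos_of_mul_pos_right (one_pos.trans_le (hdiag x))
        (zero_le_one.trans (hone _ (neg_nonneg.2 hx)))
  rcases lt_or_ge x 0 with hx | hx
  · calc 1 ≤ g (-x) * g x := hdiag x
      _ ≤ g (-y) * g x := by
        gcongr
        · exact (hpos x).le
        · exact hmono (mem_Ici.2 (neg_nonneg.2 hx.le)) (mem_Ici.2 (by linarith)) (by linarith)
  rcases lt_or_ge 0 y with hy | hy
  · calc 1 ≤ g (-y) * g y := hdiag y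
      _ ≤ g (-y) * g x := by
        gcongr
        · exact (hpos _).le
        · exact hmono hy.le hx hyx
  · exact one_le_mul_of_one_le_of_one_le (hone _ (by linarith)) (hone x hx)

noncomputable def catoniArg (C p x : ℝ) : ℝ := 1 + x + C * |x| ^ p

section catoniArg

variable {C p : ℝ}

theorem catoniArg_neg (x : ℝ) : catoniArg C p (-x) = 1 - x + C * |x| ^ p := by
  rw [catoniArg, abs_neg, sub_eq_add_neg]

theorem catoniArg_neg_mul (x : ℝ) :
    catoniArg C p (-x) * catoniArg C p x = (1 + C * |x| ^ p) ^ 2 - x ^ 2 := by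
  rw [catoniArg_neg, catoniArg]
  ring

theorem one_le_catoniArg (hC : 0 ≤ C) {x : ℝ} (hx : 0 ≤ x) : 1 ≤ catoniArg C p x := by
  have : 0 ≤ C * |x| ^ p := mul_nonneg hC (rpow_nonneg (abs_nonneg x) p)
  rw [catoniArg]
  linarith

theorem catoniArg_monotoneOn (hC : 0 ≤ C) (hp : 0 ≤ p) : MonotoneOn (catoniArg C p) (Ici 0) := by
  intro x hx y hy hxy
  rw [mem_Ici] at hx hy
  have : |x| ^ p ≤ |y| ^ p := by
    rw [abs_of_nonneg hx, abs_of_nonneg hy]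
    exact rpow_le_rpow hx hxy hp
  simp only [catoniArg]
  gcongr

theorem continuous_catoniArg (hp : 0 ≤ p) : Continuous (catoniArg C p) :=
  (continuous_const.add continuous_id).add
    (continuous_const.mul (continuous_abs.rpow_const fun _ => Or.inr hp))

theorem forall_neg_log_catoniArg_le_iff (hC : 0 ≤ C) (hp : 0 ≤ p) :
    (∀ y x, y ≤ x → -log (catoniArg C p (-y)) ≤ log (catoniArg C p x)) ↔
      ∀ x, 1 ≤ catoniArg C p (-x) * catoniArg C p x := by
  have hpos : ∀ x, 0 ≤ x → 0 < catoniArg C p x := fun x hx =>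
    one_pos.trans_le (one_le_catoniArg hC hx)
  constructor
  · intro h
    have hnonneg : ∀ x, 0 ≤ x → 1 ≤ catoniArg C p (-x) * catoniArg C p x := by
      intro x hx
      have hneg : 0 < catoniArg C p (-x) := by
        refine pos_of_continuousOn_of_neg_log_le (f := fun y => catoniArg C p (-y)) hx
          ((continuous_catoniArg hp).comp continuous_neg).continuousOn ?_ fun y hy => h y x hy.2
        simpa using hpos 0 le_rfl
      exact (neg_log_le_log_iff hneg (hpos x hx)).1 (h x x le_rfl)
    intro x
    rcases le_total 0 x with hx | hx
    · exact hnonneg x hx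
    · simpa [mul_comm] using hnonneg (-x) (neg_nonneg.2 hx)
  · intro hdiag y x hyx
    have h := one_le_comp_neg_mul_of_le (catoniArg_monotoneOn hC hp)
      (fun x hx => one_le_catoniArg hC hx) hdiag hyx
    have hy : 0 < catoniArg C p (-y) := by
      rcases le_total y 0 with hy | hy
      · exact hpos _ (by linarith)
      · exact pos_of_mul_pos_left (one_pos.trans_le h) (hpos x (hy.trans hyx)).le
    exact (neg_log_le_log_iff hy (pos_of_mul_pos_right (one_pos.trans_le h) hy.le)).2 h

end catoniArg

noncomputable def catoniConst (ε : ℝ) : ℝ :=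
  (ε / (1 + ε)) ^ ((1 + ε) / 2) * ((1 - ε) / ε) ^ ((1 - ε) / 2)

noncomputable def catoniCriticalPoint (ε : ℝ) : ℝ := √(1 - ε ^ 2) / ε

section catoniConst

variable {ε : ℝ}

theorem catoniConst_pos (h0 : 0 < ε) (h1 : ε < 1) : 0 < catoniConst ε := by
  have : 0 < 1 - ε := by linarith
  unfold catoniConst
  positivity

theorem catoniCriticalPoint_pos (h0 : 0 < ε) (h1 : ε < 1) : 0 < catoniCriticalPoint ε :=
  div_pos (sqrt_pos.2 (by nlinarith)) h0

theorem one_add_sq_catoniCriticalPoint (h0 : 0 < ε) (h1 : ε ≤ 1) :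
    1 + catoniCriticalPoint ε ^ 2 = (1 / ε) ^ 2 := by
  rw [catoniCriticalPoint, div_pow, sq_sqrt (by nlinarith)]
  field_simp
  ring

theorem catoniConst_mul_rpow_catoniCriticalPoint (h0 : 0 < ε) (h1 : ε < 1) :
    catoniConst ε * catoniCriticalPoint ε ^ (1 + ε) = (1 - ε) / ε := by
  have ha : 0 < 1 - ε := by linarith
  have hb : 0 < 1 + ε := by linarith
  have he2 : 0 < 1 - ε ^ 2 := by nlinarith
  have ht₀ := catoniCriticalPoint_pos h0 h1
  have hK := catoniConst_pos h0 h1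
  refine (log_injOn_pos (mul_pos hK (rpow_pos_of_pos ht₀ _)) (div_pos ha h0)) ?_
  rw [log_mul hK.ne' (rpow_pos_of_pos ht₀ _).ne', log_rpow ht₀, catoniCriticalPoint,
    log_div (sqrt_pos.2 he2).ne' h0.ne', log_sqrt he2.le,
    show 1 - ε ^ 2 = (1 - ε) * (1 + ε) by ring, log_mul ha.ne' hb.ne', catoniConst,
    log_mul (rpow_pos_of_pos (by positivity) _).ne' (rpow_pos_of_pos (by positivity) _).ne',
    log_rpow (by positivity), log_rpow (by positivity), log_div h0.ne' hb.ne',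
    log_div ha.ne' h0.ne']
  ring

end catoniConst

theorem one_add_mul_sq_le {ε s : ℝ} (h0 : 0 ≤ ε) (h1 : ε ≤ 1) (hs : 0 ≤ s) :
    (1 + ε) * s ^ 2 ≤ 2 * ε * s ^ (1 + ε) + (1 - ε) * (s ^ (1 + ε)) ^ 2 := by
  have hb : 0 < 1 + ε := by linarith
  rcases hs.eq_or_lt with rfl | hs
  · simp [zero_rpow hb.ne']
  have hamgm := geom_mean_le_arith_mean2_weighted (w₁ := (1 - ε) / (1 + ε))
    (w₂ := 2 * ε / (1 + ε)) (p₁ := s ^ (1 + ε)) (p₂ := 1) (by bound) (by positivity)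
    (by positivity) zero_le_one (by field_simp; ring)
  rw [one_rpow, mul_one, ← rpow_mul hs.le, mul_div_cancel₀ _ hb.ne'] at hamgm
  calc (1 + ε) * s ^ 2 = (1 + ε) * s ^ (1 + ε) * s ^ (1 - ε) := by
        rw [mul_assoc, ← rpow_add hs, show 1 + ε + (1 - ε) = (2 : ℕ) by norm_num, rpow_natCast]
    _ ≤ (1 + ε) * s ^ (1 + ε) * ((1 - ε) / (1 + ε) * s ^ (1 + ε) + 2 * ε / (1 + ε) * 1) := by
        gcongr
    _ = 2 * ε * s ^ (1 + ε) + (1 - ε) * (s ^ (1 + ε)) ^ 2 := by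
        field_simp
        ring

theorem one_add_sq_le_one_add_catoniConst_mul_sq {ε : ℝ} (h0 : 0 < ε) (h1 : ε < 1) (x : ℝ) :
    1 + x ^ 2 ≤ (1 + catoniConst ε * |x| ^ (1 + ε)) ^ 2 := by
  have ht₀ := catoniCriticalPoint_pos h0 h1
  have hK := catoniConst_mul_rpow_catoniCriticalPoint h0 h1
  have hsq := one_add_sq_catoniCriticalPoint h0 h1.le
  set t₀ := catoniCriticalPoint ε
  set s := |x| / t₀
  have hs : 0 ≤ s := by positivity
  have hx : |x| = t₀ * s := (mul_div_cancel₀ _ ht₀.ne').symm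
  have hamgm := one_add_mul_sq_le h0.le h1.le hs
  rw [← sq_abs, hx, mul_rpow ht₀.le hs, ← mul_assoc, hK, mul_pow,
    show t₀ ^ 2 = (1 / ε) ^ 2 - 1 by linarith]
  set S := s ^ (1 + ε)
  have hdiff : (1 + (1 - ε) / ε * S) ^ 2 - (1 + ((1 / ε) ^ 2 - 1) * s ^ 2) =
      (1 - ε) / ε ^ 2 * (2 * ε * S + (1 - ε) * S ^ 2 - (1 + ε) * s ^ 2) := by
    field_simp
    ring
  have hdiff_nonneg : 0 ≤ (1 - ε) / ε ^ 2 * (2 * ε * S + (1 - ε) * S ^ 2 - (1 + ε) * s ^ 2) :=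
    mul_nonneg (div_nonneg (by linarith) (by positivity)) (sub_nonneg.2 hamgm)
  linarith

theorem catoniConst_le_of_one_add_sq_le {ε C : ℝ} (h0 : 0 < ε) (h1 : ε < 1) (hC : 0 ≤ C)
    (h : 1 + catoniCriticalPoint ε ^ 2 ≤ (1 + C * catoniCriticalPoint ε ^ (1 + ε)) ^ 2) :
    catoniConst ε ≤ C := by
  have ht₀ := catoniCriticalPoint_pos h0 h1
  have hK := catoniConst_mul_rpow_catoniCriticalPoint h0 h1
  rw [one_add_sq_catoniCriticalPoint h0 h1.le] at h
  set t₀ := catoniCriticalPoint ε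
  have hle : 1 / ε ≤ 1 + C * t₀ ^ (1 + ε) :=
    (pow_le_pow_iff_left₀ (by positivity) (by positivity) two_ne_zero).1 h
  have hle' : catoniConst ε * t₀ ^ (1 + ε) ≤ C * t₀ ^ (1 + ε) := by
    rw [hK, sub_div, div_self h0.ne']
    linarith
  exact le_of_mul_le_mul_right hle' (rpow_pos_of_pos ht₀ _)

theorem forall_one_add_sq_le_iff_catoniConst_le {ε C : ℝ} (h0 : 0 < ε) (h1 : ε < 1)
    (hC : 0 ≤ C) : (∀ x : ℝ, 1 + x ^ 2 ≤ (1 + C * |x| ^ (1 + ε)) ^ 2) ↔ catoniConst ε ≤ C := by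
  refine ⟨fun h => catoniConst_le_of_one_add_sq_le h0 h1 hC ?_, fun hKC x => ?_⟩
  · simpa [abs_of_pos (catoniCriticalPoint_pos h0 h1)] using h (catoniCriticalPoint ε)
  · have hK := catoniConst_pos h0 h1
    calc 1 + x ^ 2 ≤ (1 + catoniConst ε * |x| ^ (1 + ε)) ^ 2 :=
          one_add_sq_le_one_add_catoniConst_mul_sq h0 h1 x
      _ ≤ (1 + C * |x| ^ (1 + ε)) ^ 2 := by gcongr

/-- Fix `ε ∈ (0,1)`, set `p = 1+ε`, and let `C > 0`. There exists a
non-decreasing function `φ : ℝ → ℝ` satisfying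
`-log (1 - x + C|x|^p) ≤ φ x ≤ log (1 + x + C|x|^p)` for all `x`
if and only if `C ≥ (ε/(1+ε))^((1+ε)/2) * ((1-ε)/ε)^((1-ε)/2)`. -/
theorem stmt0 (ε : ℝ) (hε : ε ∈ Set.Ioo (0 : ℝ) 1) (C : ℝ) (hC : 0 < C) :
    (∃ φ : ℝ → ℝ, Monotone φ ∧ ∀ x : ℝ,
        -Real.log (1 - x + C * |x| ^ (1 + ε)) ≤ φ x ∧
        φ x ≤ Real.log (1 + x + C * |x| ^ (1 + ε))) ↔
      (ε / (1 + ε)) ^ ((1 + ε) / 2) * ((1 - ε) / ε) ^ ((1 - ε) / 2) ≤ C := by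
  obtain ⟨hε0, hε1⟩ := hε
  rw [exists_monotone_between_iff]
  simp only [← catoniArg_neg]
  refine (forall_neg_log_catoniArg_le_iff hC.le (by linarith)).trans ?_
  simp only [catoniArg_neg_mul, le_sub_iff_add_le]
  exact forall_one_add_sq_le_iff_catoniConst_le hε0 hε1 hC.le
end

section
/- Let x₁,…,x_n ∈ 𝒳, α > 0, let φ: ℝ → ℝ be continuously differentiable, and let (w,x) ↦ f_w(x) be such that w ↦ f_w(xᵢ) is differentiable on ℝ^d for each i. Suppose μ̂: ℝ^d → ℝ is differentiable and satisfies Σ_{i=1}^n φ(α(f_w(xᵢ) − μ̂(w))) = 0 for all w, and that Σ_{i=1}^n φ′(α(f_w(xᵢ) − μ̂(w))) ≠ 0. Then the gradient of μ̂ is the weighted average ∇_w μ̂(w) = [ Σᵢ φ′(α(f_w(xᵢ) − μ̂(w)))·∇_w f_w(xᵢ) ] / [ Σᵢ φ′(α(f_w(xᵢ) − μ̂(w))) ]. In particular, if ŵ is an interior minimizer of w ↦ μ̂(w), then ∇_w μ̂(ŵ) = 0. -/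
/-!
Differentiating the identity `∑ᵢ φ(α (f_w(xᵢ) - μ̂(w))) = 0` in `w` by the chain rule gives
`∑ᵢ φ'(α (f_w(xᵢ) - μ̂(w))) · α · (∇f_w(xᵢ) - ∇μ̂(w)) = 0`; since `α ≠ 0` this is a linear equation
for `∇μ̂(w)` whose coefficient is `∑ᵢ φ'(…)`, and solving it gives the weighted average.
At a local minimizer the gradient vanishes by Fermat's theorem.
-/

open InnerProductSpace

section ImplicitRoot

variable {E : Type*} [NormedAddCommGroup E] [NormedSpace ℝ E] {ι : Type*} [Fintype ι]
  {φ : ℝ → ℝ} {g : ι → E → ℝ} {m : E → ℝ} {α : ℝ} {w : E}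

theorem hasFDerivAt_sum_comp_smul_sub
    (hφ : ∀ i, DifferentiableAt ℝ φ (α * (g i w - m w)))
    (hg : ∀ i, DifferentiableAt ℝ (g i) w) (hm : DifferentiableAt ℝ m w) :
    HasFDerivAt (fun w' => ∑ i, φ (α * (g i w' - m w')))
      (∑ i, deriv φ (α * (g i w - m w)) • α • (fderiv ℝ (g i) w - fderiv ℝ m w)) w :=
  HasFDerivAt.fun_sum fun i _ =>
    (hφ i).hasDerivAt.comp_hasFDerivAt w
      (((hg i).hasFDerivAt.sub hm.hasFDerivAt).const_smul α)

theorem sum_deriv_smul_fderiv_eq_of_sum_eq_zero (hα : α ≠ 0)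
    (hφ : ∀ i, DifferentiableAt ℝ φ (α * (g i w - m w)))
    (hg : ∀ i, DifferentiableAt ℝ (g i) w) (hm : DifferentiableAt ℝ m w)
    (hroot : ∀ w', ∑ i, φ (α * (g i w' - m w')) = 0) :
    (∑ i, deriv φ (α * (g i w - m w))) • fderiv ℝ m w =
      ∑ i, deriv φ (α * (g i w - m w)) • fderiv ℝ (g i) w := by
  set c := fun i => deriv φ (α * (g i w - m w))
  have hzero : ∑ i, c i • α • (fderiv ℝ (g i) w - fderiv ℝ m w) = 0 := by
    refine (hasFDerivAt_sum_comp_smul_sub hφ hg hm).unique ?_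
    simpa only [hroot] using hasFDerivAt_const (0 : ℝ) w
  have hexpand : ∑ i, c i • α • (fderiv ℝ (g i) w - fderiv ℝ m w) =
      α • (∑ i, c i • fderiv ℝ (g i) w - (∑ i, c i) • fderiv ℝ m w) := by
    simp only [smul_sub, Finset.sum_sub_distrib, Finset.smul_sum, Finset.sum_smul, smul_comm α]
  rw [hexpand, smul_eq_zero, sub_eq_zero] at hzero
  exact (hzero.resolve_left hα).symm

end ImplicitRoot

theorem gradient_eq_inv_sum_smul_sum_of_sum_eq_zero {F : Type*} [NormedAddCommGroup F]
    [InnerProductSpace ℝ F] [CompleteSpace F] {ι : Type*} [Fintype ι]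
    {φ : ℝ → ℝ} {g : ι → F → ℝ} {m : F → ℝ} {α : ℝ} {w : F} (hα : α ≠ 0)
    (hφ : ∀ i, DifferentiableAt ℝ φ (α * (g i w - m w)))
    (hg : ∀ i, DifferentiableAt ℝ (g i) w) (hm : DifferentiableAt ℝ m w)
    (hroot : ∀ w', ∑ i, φ (α * (g i w' - m w')) = 0)
    (hne : ∑ i, deriv φ (α * (g i w - m w)) ≠ 0) :
    gradient m w = (∑ i, deriv φ (α * (g i w - m w)))⁻¹ •
      ∑ i, deriv φ (α * (g i w - m w)) • gradient (g i) w := by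
  have key : (∑ i, deriv φ (α * (g i w - m w))) • gradient m w =
      ∑ i, deriv φ (α * (g i w - m w)) • gradient (g i) w := by
    simpa only [gradient, map_smul, map_sum] using congrArg (toDual ℝ F).symm
      (sum_deriv_smul_fderiv_eq_of_sum_eq_zero hα hφ hg hm hroot)
  rw [← key, smul_smul, inv_mul_cancel₀ hne, one_smul]

theorem IsLocalMin.gradient_eq_zero {F : Type*} [NormedAddCommGroup F] [InnerProductSpace ℝ F]
    [CompleteSpace F] {m : F → ℝ} {w : F} (h : IsLocalMin m w) : gradient m w = 0 := by
  simp [gradient, h.fderiv_eq_zero]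

/-- If `μ̂(w)` is implicitly defined by
`∑ᵢ φ(α (f_w(xᵢ) - μ̂(w))) = 0`, then its gradient is the weighted average
`∇μ̂(w) = (∑ᵢ φ'(α(f_w(xᵢ) - μ̂(w))) ∇_w f_w(xᵢ)) / (∑ᵢ φ'(α(f_w(xᵢ) - μ̂(w))))`;
in particular at any interior (local) minimizer `ŵ` of `μ̂` one has `∇μ̂(ŵ) = 0`. -/
theorem stmt18 {𝒳 : Type*} (d n : ℕ) (x : Fin n → 𝒳) (α : ℝ) (hα : 0 < α)
    (φ : ℝ → ℝ) (hφ : ContDiff ℝ 1 φ)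
    (f : EuclideanSpace ℝ (Fin d) → 𝒳 → ℝ)
    (hf : ∀ i, Differentiable ℝ (fun w => f w (x i)))
    (muhat : EuclideanSpace ℝ (Fin d) → ℝ) (hmu : Differentiable ℝ muhat)
    (hroot : ∀ w, ∑ i, φ (α * (f w (x i) - muhat w)) = 0)
    (hne : ∀ w, ∑ i, deriv φ (α * (f w (x i) - muhat w)) ≠ 0) :
    (∀ w, gradient muhat w =
      (∑ i, deriv φ (α * (f w (x i) - muhat w)))⁻¹ •
        ∑ i, deriv φ (α * (f w (x i) - muhat w)) • gradient (fun w' => f w' (x i)) w) ∧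
    (∀ what, IsLocalMin muhat what → gradient muhat what = 0) :=
  ⟨fun w => gradient_eq_inv_sum_smul_sum_of_sum_eq_zero (g := fun i w' => f w' (x i)) hα.ne'
      (fun _ => hφ.differentiable one_ne_zero _) (fun i => hf i w) (hmu w) hroot (hne w),
    fun _ => IsLocalMin.gradient_eq_zero⟩
end

section
/- Let F: ℝ^d → ℝ be differentiable with L-Lipschitz gradient and κ-strongly convex, with (unique) minimizer w*. Let γ > 0 satisfy γ ≤ 2/(κ + L), let ζ ≥ 0, and let (w^(t)) be any sequence with w^(t+1) = w^(t) − γ·g^(t), where the vectors g^(t) ∈ ℝ^d satisfy ‖g^(t) − ∇F(w^(t))‖ ≤ ζ for all t. Set a = √(1 − 2γκL/(κ+L)). Then for every t ≥ 0: ‖w^(t+1) − w*‖ ≤ a^(t+1)·‖w^(0) − w*‖ + ζ·γ·(1 − a^(t+1))/(1 − a); in particular ‖w^(t+1) − w*‖ ≤ a^(t+1)·‖w^(0) − w*‖ + ζ·γ/(1 − a). -/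
/-!
Strong convexity and the descent lemma sandwich the Bregman divergence of `F` between
`κ/2 ‖·‖²` and `L/2 ‖·‖²`. Applying the upper bound for `F - κ/2 ‖·‖²` at a gradient-step point
gives co-coercivity, `‖∇F u - ∇F v‖² + κL ‖u - v‖² ≤ (κ + L) ⟪∇F u - ∇F v, u - v⟫`. Since
`∇F w* = 0`, this makes the exact step `x ↦ x - γ ∇F x` an `a`-contraction towards `w*`. The
gradient error moves each iterate by at most `γζ`, and unrolling `eₜ₊₁ ≤ a eₜ + γζ` gives the
geometric bound.
-/

open scoped RealInnerProductSpace

variable {E : Type*} [NormedAddCommGroup E] [InnerProductSpace ℝ E]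

/-- `φ'` plays the role of the gradient of `φ`, but no relation between them is assumed. -/
def bregman (φ : E → ℝ) (φ' : E → E) (x y : E) : ℝ :=
  φ y - φ x - ⟪φ' x, y - x⟫

section Bregman

variable {φ : E → ℝ} {φ' : E → E}

theorem bregman_add_bregman_swap (x y : E) :
    bregman φ φ' x y + bregman φ φ' y x = ⟪φ' y - φ' x, y - x⟫ := by
  simp only [bregman, inner_sub_right, real_inner_comm x, real_inner_comm y]
  ring

theorem bregman_eq_sub_add_inner (u v w : E) :
    bregman φ φ' v u = bregman φ φ' v w - bregman φ φ' u w + ⟪φ' u - φ' v, u - w⟫ := by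
  simp only [bregman, inner_sub_left, inner_sub_right]
  ring

theorem bregman_sub_half_mul_sq_norm (κ : ℝ) (x y : E) :
    bregman (fun z ↦ φ z - κ / 2 * ‖z‖ ^ 2) (fun z ↦ φ' z - κ • z) x y
      = bregman φ φ' x y - κ / 2 * ‖y - x‖ ^ 2 := by
  simp only [bregman, norm_sub_sq_real, inner_sub_left, inner_sub_right, real_inner_smul_left,
    real_inner_self_eq_norm_sq, real_inner_comm x y]
  ring

theorem sq_norm_sub_div_le_bregman {M : ℝ} (h0 : ∀ x y, 0 ≤ bregman φ φ' x y)
    (hM : ∀ x y, bregman φ φ' x y ≤ M / 2 * ‖y - x‖ ^ 2) (u v : E) :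
    ‖φ' u - φ' v‖ ^ 2 / (2 * M) ≤ bregman φ φ' v u := by
  -- the three-point identity at the gradient step `u - M⁻¹ • (φ' u - φ' v)`
  set p := φ' u - φ' v
  have hshift : u - M⁻¹ • p - u = -(M⁻¹ • p) := by abel
  have hup := hM u (u - M⁻¹ • p)
  rw [hshift, norm_neg, norm_smul, Real.norm_eq_abs, mul_pow, sq_abs] at hup
  have hinner : ⟪p, u - (u - M⁻¹ • p)⟫ = M⁻¹ * ‖p‖ ^ 2 := by
    rw [sub_sub_cancel, real_inner_smul_right, real_inner_self_eq_norm_sq]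
  have hM' : M / 2 * (M⁻¹ ^ 2 * ‖p‖ ^ 2) = M⁻¹ / 2 * ‖p‖ ^ 2 := by
    rcases eq_or_ne M 0 with rfl | hM0
    · simp
    · field_simp
  rw [bregman_eq_sub_add_inner u v (u - M⁻¹ • p), hinner]
  have := h0 v (u - M⁻¹ • p)
  rw [div_eq_mul_inv, mul_inv]
  linarith

/-- Nesterov, *Introductory Lectures on Convex Optimization*, Thm 2.1.12. -/
theorem sq_norm_sub_add_mul_sq_norm_le_inner {κ L : ℝ} (hL : 0 ≤ L)
    (hlip : ∀ u v, ‖φ' u - φ' v‖ ≤ L * ‖u - v‖)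
    (hlow : ∀ x y, κ / 2 * ‖y - x‖ ^ 2 ≤ bregman φ φ' x y)
    (hup : ∀ x y, bregman φ φ' x y ≤ L / 2 * ‖y - x‖ ^ 2) (u v : E) :
    ‖φ' u - φ' v‖ ^ 2 + κ * L * ‖u - v‖ ^ 2 ≤ (κ + L) * ⟪φ' u - φ' v, u - v⟫ := by
  have hmono : κ * ‖u - v‖ ^ 2 ≤ ⟪φ' u - φ' v, u - v⟫ := by
    rw [← bregman_add_bregman_swap]
    have hvu := hlow v u
    have huv := hlow u v
    rw [norm_sub_rev] at huv
    linarith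
  rcases le_or_gt L κ with hLκ | hκL
  · have hg : ‖φ' u - φ' v‖ ^ 2 ≤ L ^ 2 * ‖u - v‖ ^ 2 := by
      rw [← mul_pow]
      exact pow_le_pow_left₀ (norm_nonneg _) (hlip u v) 2
    calc ‖φ' u - φ' v‖ ^ 2 + κ * L * ‖u - v‖ ^ 2 ≤ (κ + L) * (L * ‖u - v‖ ^ 2) := by linarith
      _ ≤ (κ + L) * ⟪φ' u - φ' v, u - v⟫ := by
        gcongr
        · linarith
        · exact (mul_le_mul_of_nonneg_right hLκ (sq_nonneg _)).trans hmono
  · -- `φ - κ/2 ‖·‖²` is convex with `(L - κ)`-quadratic upper bound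
    have hG0 : ∀ x y, 0 ≤ bregman (fun z ↦ φ z - κ / 2 * ‖z‖ ^ 2) (fun z ↦ φ' z - κ • z) x y :=
      fun x y ↦ by rw [bregman_sub_half_mul_sq_norm]; linarith [hlow x y]
    have hGM : ∀ x y, bregman (fun z ↦ φ z - κ / 2 * ‖z‖ ^ 2) (fun z ↦ φ' z - κ • z) x y
        ≤ (L - κ) / 2 * ‖y - x‖ ^ 2 :=
      fun x y ↦ by rw [bregman_sub_half_mul_sq_norm]; linarith [hup x y]
    have h1 := sq_norm_sub_div_le_bregman hG0 hGM u v
    have h2 := sq_norm_sub_div_le_bregman hG0 hGM v u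
    simp only [bregman_sub_half_mul_sq_norm] at h1 h2
    rw [norm_sub_rev (φ' v - κ • v), norm_sub_rev v u] at h2
    have hq : ‖φ' u - κ • u - (φ' v - κ • v)‖ ^ 2
        = ‖φ' u - φ' v‖ ^ 2 - 2 * κ * ⟪φ' u - φ' v, u - v⟫ + κ ^ 2 * ‖u - v‖ ^ 2 := by
      rw [show φ' u - κ • u - (φ' v - κ • v) = (φ' u - φ' v) - κ • (u - v) by
        rw [smul_sub]; abel, norm_sub_sq_real, norm_smul, real_inner_smul_right,
        Real.norm_eq_abs, mul_pow, sq_abs]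
      ring
    rw [hq, div_le_iff₀ (by linarith)] at h1 h2
    nlinarith [bregman_add_bregman_swap (φ := φ) (φ' := φ') v u]

end Bregman

theorem bregman_gradient_le_of_lipschitz [CompleteSpace E] {F : E → ℝ} {L : ℝ}
    (hF : Differentiable ℝ F) (hlip : ∀ u v, ‖gradient F u - gradient F v‖ ≤ L * ‖u - v‖)
    (x y : E) : bregman F (gradient F) x y ≤ L / 2 * ‖y - x‖ ^ 2 := by
  set d := y - x
  have hderiv (t : ℝ) :
      HasDerivAt (fun s : ℝ ↦ F (x + s • d)) ⟪gradient F (x + t • d), d⟫ t := by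
    rw [inner_gradient_left]
    refine (hF _).hasFDerivAt.comp_hasDerivAt t ?_
    simpa using ((hasDerivAt_id t).smul_const d).const_add x
  have hquad (t : ℝ) :
      HasDerivAt (fun s : ℝ ↦ F x + s * ⟪gradient F x, d⟫ + L / 2 * s ^ 2 * ‖d‖ ^ 2)
        (⟪gradient F x, d⟫ + L * t * ‖d‖ ^ 2) t := by
    refine ((((hasDerivAt_id' t).mul_const ⟪gradient F x, d⟫).const_add (F x)).add
      (((hasDerivAt_pow 2 t).const_mul (L / 2)).mul_const (‖d‖ ^ 2))).congr_deriv ?_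
    push_cast
    ring
  have hslope : ∀ t ∈ Set.Ico (0 : ℝ) 1,
      ⟪gradient F (x + t • d), d⟫ ≤ ⟪gradient F x, d⟫ + L * t * ‖d‖ ^ 2 := by
    rintro t ⟨ht, -⟩
    have := calc ⟪gradient F (x + t • d) - gradient F x, d⟫
        ≤ ‖gradient F (x + t • d) - gradient F x‖ * ‖d‖ := real_inner_le_norm _ _
      _ ≤ L * ‖x + t • d - x‖ * ‖d‖ := by gcongr; exact hlip _ _
      _ = L * t * ‖d‖ ^ 2 := by
        rw [add_sub_cancel_left, norm_smul, Real.norm_of_nonneg ht]; ring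
    rwa [inner_sub_left, sub_le_iff_le_add'] at this
  -- compare `t ↦ F (x + t • d)` on `[0, 1]` with its quadratic majorant
  have := image_le_of_deriv_right_le_deriv_boundary
    (fun t _ ↦ (hderiv t).continuousAt.continuousWithinAt) (fun t _ ↦ (hderiv t).hasDerivWithinAt)
    (by simp) (fun t _ ↦ (hquad t).continuousAt.continuousWithinAt)
    (fun t _ ↦ (hquad t).hasDerivWithinAt) hslope (Set.right_mem_Icc.2 zero_le_one)
  rw [one_smul, show x + d = y from add_sub_cancel x y] at this
  simp only [bregman]
  linarith

theorem norm_sub_smul_le_sqrt_mul {κ L γ : ℝ} (hκL : 0 < κ + L) (hγ0 : 0 ≤ γ)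
    (hγ : γ ≤ 2 / (κ + L)) {d g : E} (h : ‖g‖ ^ 2 + κ * L * ‖d‖ ^ 2 ≤ (κ + L) * ⟪g, d⟫) :
    ‖d - γ • g‖ ≤ √(1 - 2 * γ * κ * L / (κ + L)) * ‖d‖ := by
  have hsq : ‖d - γ • g‖ ^ 2 ≤ (1 - 2 * γ * κ * L / (κ + L)) * ‖d‖ ^ 2 := by
    rw [le_div_iff₀ hκL] at hγ
    rw [norm_sub_sq_real, norm_smul, real_inner_smul_right, Real.norm_of_nonneg hγ0,
      real_inner_comm, sub_mul, div_mul_eq_mul_div, ← sub_nonneg]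
    field_simp
    nlinarith [mul_nonneg (mul_nonneg hγ0 (sq_nonneg ‖g‖)) (sub_nonneg.2 hγ)]
  rw [← Real.sqrt_sq (norm_nonneg d), ← Real.sqrt_mul' _ (sq_nonneg _)]
  exact (Real.abs_le_sqrt hsq).trans' (le_abs_self _)

theorem le_pow_mul_add_geom_of_le_mul_add {e : ℕ → ℝ} {a b : ℝ} (ha0 : 0 ≤ a) (ha1 : a ≠ 1)
    (he : ∀ t, e (t + 1) ≤ a * e t + b) (t : ℕ) :
    e t ≤ a ^ t * e 0 + b * (1 - a ^ t) / (1 - a) := by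
  induction t with
  | zero => simp
  | succ t ih =>
    have h1a : 1 - a ≠ 0 := sub_ne_zero.2 ha1.symm
    calc e (t + 1) ≤ a * (a ^ t * e 0 + b * (1 - a ^ t) / (1 - a)) + b := by
          linarith [he t, mul_le_mul_of_nonneg_left ih ha0]
      _ = a ^ (t + 1) * e 0 + b * (1 - a ^ (t + 1)) / (1 - a) := by
          field_simp; ring

/-- Inexact gradient descent on a `κ`-strongly convex function with
`L`-Lipschitz gradient: if `w^(t+1) = w^(t) - γ g^(t)` with `‖g^(t) - ∇F(w^(t))‖ ≤ ζ`
and `γ ≤ 2/(κ+L)`, then with `a = √(1 - 2γκL/(κ+L))`, for every `t`: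
`‖w^(t+1) - w*‖ ≤ a^(t+1) ‖w^(0) - w*‖ + ζγ(1 - a^(t+1))/(1-a)`, and in particular
`‖w^(t+1) - w*‖ ≤ a^(t+1) ‖w^(0) - w*‖ + ζγ/(1-a)`. -/
theorem stmt19 (dim : ℕ) (F : EuclideanSpace ℝ (Fin dim) → ℝ)
    (hFdiff : Differentiable ℝ F)
    (L κ : ℝ) (hL : 0 < L) (hκ : 0 < κ)
    (hlip : ∀ u v : EuclideanSpace ℝ (Fin dim),
      ‖gradient F u - gradient F v‖ ≤ L * ‖u - v‖)
    (hsc : ∀ u v : EuclideanSpace ℝ (Fin dim),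
      (κ / 2) * ‖u - v‖ ^ 2 ≤ F u - F v - ⟪gradient F v, u - v⟫)
    (wstar : EuclideanSpace ℝ (Fin dim)) (hmin : ∀ w, F wstar ≤ F w)
    (γ : ℝ) (hγ0 : 0 < γ) (hγ : γ ≤ 2 / (κ + L))
    (ζ : ℝ) (hζ : 0 ≤ ζ)
    (w g : ℕ → EuclideanSpace ℝ (Fin dim))
    (hupdate : ∀ t, w (t + 1) = w t - γ • g t)
    (herr : ∀ t, ‖g t - gradient F (w t)‖ ≤ ζ)
    (a : ℝ) (ha : a = Real.sqrt (1 - 2 * γ * κ * L / (κ + L))) :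
    ∀ t : ℕ,
      ‖w (t + 1) - wstar‖ ≤
        a ^ (t + 1) * ‖w 0 - wstar‖ + ζ * γ * (1 - a ^ (t + 1)) / (1 - a) ∧
      ‖w (t + 1) - wstar‖ ≤ a ^ (t + 1) * ‖w 0 - wstar‖ + ζ * γ / (1 - a) := by
  have hgrad : gradient F wstar = 0 := by
    have hloc : IsLocalMin F wstar := Filter.Eventually.of_forall hmin
    simp [gradient, hloc.fderiv_eq_zero]
  have hcoco := sq_norm_sub_add_mul_sq_norm_le_inner hL.le hlip (fun x y ↦ hsc y x)
    (bregman_gradient_le_of_lipschitz hFdiff hlip)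
  have hexact (x) : ‖x - wstar - γ • gradient F x‖ ≤ a * ‖x - wstar‖ := by
    have := hcoco x wstar
    rw [hgrad, sub_zero] at this
    exact ha ▸ norm_sub_smul_le_sqrt_mul (add_pos hκ hL) hγ0.le hγ this
  have hstep (t) : ‖w (t + 1) - wstar‖ ≤ a * ‖w t - wstar‖ + ζ * γ := calc
    ‖w (t + 1) - wstar‖
        = ‖(w t - wstar - γ • gradient F (w t)) - γ • (g t - gradient F (w t))‖ := by
      rw [hupdate, smul_sub]; abel_nf
    _ ≤ a * ‖w t - wstar‖ + ζ * γ := by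
      refine norm_sub_le_of_le (hexact _) ?_
      rw [norm_smul, Real.norm_of_nonneg hγ0.le, mul_comm]
      exact mul_le_mul_of_nonneg_right (herr t) hγ0.le
  have ha0 : 0 ≤ a := ha ▸ Real.sqrt_nonneg _
  have ha1 : a < 1 := by
    rw [ha, Real.sqrt_lt' one_pos, one_pow, sub_lt_self_iff]
    positivity
  intro t
  have hgeom :=
    le_pow_mul_add_geom_of_le_mul_add (e := fun t ↦ ‖w t - wstar‖) ha0 ha1.ne hstep (t + 1)
  refine ⟨hgeom, hgeom.trans ?_⟩
  gcongr _ + ?_ / _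
  exact mul_le_of_le_one_right (by positivity) (sub_le_self _ (pow_nonneg ha0 _))
end
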